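/- arXiv:2512.18223 — 2 statements merged into one kernel-verified Lean document; each statement's English description precedes it below -/
import Mathlib

section
/- Let D' be a disk of radius r' ≥ 1 whose center c' lies on the perpendicular bisector of the points B = (1/2, 1/(2√3)) and C = (-1/2, 1/(2√3)) (i.e., on the y-axis), with c' outside the closed disk of radius 1/√3 centered at the origin. If D' contains neither B nor C nor A = (0, -1/√3), and D' intersects the circle Q of radius r_q centered at the origin, then r_q ≥ 2/√3 - 1. (It suffices to prove: if dist(c', B) > r', dist(c', A) > r', |c'| > 1/√3, and dist from c' to Q is at most r', then r_q ≥ 2/√3 - 1.) -/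
noncomputable def pt (x y : ℝ) : EuclideanSpace ℝ (Fin 2) := WithLp.toLp 2 ![x, y]

/-!
Write s = 1/√3. Moving a point c outward along a ray from the origin never decreases
‖c‖ - dist c X, by the triangle inequality through the starting point. Since
‖c'‖ - r' ≤ r_q and r' < dist c' X for X = A, B, it suffices to see that c' lies beyond a
reference point P with ‖P‖ - dist P X ≥ 2s - 1. As r' ≥ 1, the center c' = (0, y) is at
distance > 1 from A and from B. For y ≤ 0 this puts c' beyond P = A, where the excess is
‖A‖ = s. For y > 0 it puts c' beyond P = (0, 2s), the point of the positive axis at distance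
exactly 1 from B, where the excess is 2s - 1.
-/

lemma norm_sub_dist_le_norm_smul_sub_dist {E : Type*} [SeminormedAddCommGroup E]
    [NormedSpace ℝ E] (P X : E) {t : ℝ} (ht : 1 ≤ t) :
    ‖P‖ - dist P X ≤ ‖t • P‖ - dist (t • P) X := by
  have hmove : dist (t • P) P = (t - 1) * ‖P‖ := by
    rw [dist_eq_norm, show t • P - P = (t - 1) • P by rw [sub_smul, one_smul], norm_smul,
      Real.norm_of_nonneg (by linarith)]
  have := dist_triangle (t • P) P X
  rw [norm_smul, Real.norm_of_nonneg (by linarith)]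
  linarith

lemma dist_pt (a b c d : ℝ) : dist (pt a b) (pt c d) = √((a - c) ^ 2 + (b - d) ^ 2) := by
  simp [pt, EuclideanSpace.dist_eq, Fin.sum_univ_two, Real.dist_eq, sq_abs]

lemma norm_pt (a b : ℝ) : ‖pt a b‖ = √(a ^ 2 + b ^ 2) := by
  simp [pt, EuclideanSpace.norm_eq, Fin.sum_univ_two, sq_abs]

lemma smul_pt (t a b : ℝ) : t • pt a b = pt (t * a) (t * b) := by
  ext i; fin_cases i <;> simp [pt]

lemma pt_zero_zero : pt 0 0 = 0 := by
  ext i; fin_cases i <;> simp [pt]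

lemma eq_pt_of_apply_zero {c : EuclideanSpace ℝ (Fin 2)} (h : c 0 = 0) : c = pt 0 (c 1) := by
  ext i; fin_cases i <;> simp [pt, h]

lemma exists_pt_zero_eq_smul_of_nonpos {s y : ℝ} (hs : 0 < s) (hs1 : s ≤ 1) (hy : y ≤ 0)
    (h : 1 < dist (pt 0 y) (pt 0 (-s))) : ∃ t : ℝ, 1 ≤ t ∧ pt 0 y = t • pt 0 (-s) := by
  rw [dist_pt, sub_zero, zero_pow two_ne_zero, zero_add, Real.sqrt_sq_eq_abs, sub_neg_eq_add] at h
  have hys : y ≤ -s := by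
    cases abs_cases (y + s) <;> linarith
  refine ⟨-y / s, ?_, ?_⟩
  · rw [le_div_iff₀ hs]; linarith
  · rw [smul_pt, mul_zero]; congr 1; field_simp

lemma exists_pt_zero_eq_smul_of_pos {s y : ℝ} (hs : 0 < s) (hs3 : 3 * s ^ 2 = 1) (hy : 0 < y)
    (h : 1 < dist (pt 0 y) (pt (1 / 2) (s / 2))) :
    ∃ t : ℝ, 1 ≤ t ∧ pt 0 y = t • pt 0 (2 * s) := by
  rw [dist_pt, Real.lt_sqrt zero_le_one] at h
  have hys : 2 * s ≤ y := by nlinarith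
  refine ⟨y / (2 * s), ?_, ?_⟩
  · rw [le_div_iff₀ (by positivity)]; linarith
  · rw [smul_pt, mul_zero]; congr 1; field_simp

theorem stmt_3_general (c' : EuclideanSpace ℝ (Fin 2)) (r' r_q : ℝ)
    (hr' : 1 ≤ r')
    (haxis : c' 0 = 0)
    (hB : dist c' (pt (1 / 2) (1 / (2 * Real.sqrt 3))) > r')
    (hA : dist c' (pt 0 (-(1 / Real.sqrt 3))) > r')
    (hQ : dist c' (pt 0 0) ≤ r' + r_q) :
    r_q ≥ 2 / Real.sqrt 3 - 1 := by
  set s := 1 / Real.sqrt 3 with hs_def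
  have hs : 0 < s := by positivity
  have hs1 : s ≤ 1 := by
    rw [hs_def, div_le_one (by positivity), Real.one_le_sqrt]; norm_num
  have hs3 : 3 * s ^ 2 = 1 := by
    rw [hs_def, div_pow, Real.sq_sqrt (by norm_num)]; norm_num
  rw [show 1 / (2 * Real.sqrt 3) = s / 2 by rw [hs_def]; ring] at hB
  rw [show 2 / Real.sqrt 3 = 2 * s by rw [hs_def]; ring, ge_iff_le]
  rw [pt_zero_zero, dist_zero_right] at hQ
  obtain ⟨X, P, hX, hP, t, ht, hc⟩ : ∃ X P, r' < dist c' X ∧ 2 * s - 1 ≤ ‖P‖ - dist P X ∧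
      ∃ t : ℝ, 1 ≤ t ∧ c' = t • P := by
    rw [eq_pt_of_apply_zero haxis] at hA hB ⊢
    rcases le_or_gt (c' 1) 0 with hy | hy
    · refine ⟨_, _, hA, ?_, exists_pt_zero_eq_smul_of_nonpos hs hs1 hy (hr'.trans_lt hA)⟩
      rw [dist_self, norm_pt, neg_sq, zero_pow two_ne_zero, zero_add, Real.sqrt_sq hs.le]
      linarith
    · refine ⟨_, _, hB, ?_, exists_pt_zero_eq_smul_of_pos hs hs3 hy (hr'.trans_lt hB)⟩
      have hPB : (0 - 1 / 2) ^ 2 + (2 * s - s / 2) ^ 2 = 1 := by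
        linear_combination 3 / 4 * hs3
      rw [dist_pt, norm_pt, hPB, Real.sqrt_one, zero_pow two_ne_zero, zero_add,
        Real.sqrt_sq (by positivity)]
  calc 2 * s - 1 ≤ ‖P‖ - dist P X := hP
    _ ≤ ‖c'‖ - dist c' X := hc ▸ norm_sub_dist_le_norm_smul_sub_dist P X ht
    _ ≤ r_q := by linarith

theorem stmt_3 (c' : EuclideanSpace ℝ (Fin 2)) (r' r_q : ℝ)
    (hr' : 1 ≤ r')
    (haxis : c' 0 = 0)
    (hB : dist c' (pt (1 / 2) (1 / (2 * Real.sqrt 3))) > r')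
    (hA : dist c' (pt 0 (-(1 / Real.sqrt 3))) > r')
    (hout : dist c' (pt 0 0) > 1 / Real.sqrt 3)
    (hQ : dist c' (pt 0 0) ≤ r' + r_q) :
    r_q ≥ 2 / Real.sqrt 3 - 1 :=
  stmt_3_general c' r' r_q hr' haxis hB hA hQ
end

section
/- Let Q be a circle of radius r_q centered at the origin with 2/√3 − 1 ≤ r_q, let C = (−1/2, 1/(2√3)), and let D' be a disk with center c' in the closed wedge between rays from the origin through C and through B = (1/2, 1/(2√3)) (the wedge containing the positive y-axis), with dist(c', C) equal to the radius r' of D' (D' touches C) and dist(c', origin) = r' + r_q (D' touches Q externally), r' ≤ 3. Let D_b be a disk of radius r_b ≤ 3 whose center c_b lies on the negative y-axis with D_b tangent externally to Q and not containing C... then D' and D_b are disjoint below the line through the origin and C. (This is the instantiation of Lemma 120 with p = C, M = Q, D₂ = D', D₁ = D_b after a rotation of the plane.) -/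
/-!
Let `u = (-√3/2, 1/2)` be the unit vector along the line `y = -x/√3` into the second quadrant and
`m = r(2/√3 - 1)` the radius of `M`. The disk `D₂` has center `(r₂ + m) u`, so it lies in the
half-plane `⟪z, u⟫ ≥ m` and meets the tangent line `⟪z, u⟫ = m` of `M` only at `m u`, which lies on
the line `y = -x/√3`. The disk `D₁` lies in the opposite half-plane `⟪z, u⟫ ≤ m`: once its center is
solved for from the two tangency conditions, this becomes a polynomial inequality in `r₁` and `m`,
which holds for `r₁ ≤ 3` and `3/20 ≤ m ≤ 1/2`. Hence `D₁ ∩ D₂ ⊆ {m u}`.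
-/

open Real Metric RealInnerProductSpace

section HalfPlane

variable {E : Type*} [NormedAddCommGroup E] [InnerProductSpace ℝ E] {u c z : E} {R m : ℝ}

theorem inner_le_of_mem_closedBall (hu : ‖u‖ = 1) (hc : ⟪c, u⟫ + R ≤ m)
    (hz : z ∈ closedBall c R) : ⟪z, u⟫ ≤ m := by
  have h : ⟪z - c, u⟫ ≤ R :=
    calc ⟪z - c, u⟫ ≤ ‖z - c‖ * ‖u‖ := real_inner_le_norm _ _
      _ ≤ R := by rw [hu, mul_one, ← dist_eq_norm]; exact hz
  rw [inner_sub_left] at h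
  linarith

theorem eq_smul_of_mem_closedBall_of_inner_le (hu : ‖u‖ = 1)
    (hz : z ∈ closedBall ((R + m) • u) R) (hzu : ⟪z, u⟫ ≤ m) : z = m • u := by
  have hR : 0 ≤ R := dist_nonneg.trans hz
  have hexpand :
      ‖z - (R + m) • u‖ ^ 2 = ‖z - m • u‖ ^ 2 - 2 * R * (⟪z, u⟫ - m) + R ^ 2 := by
    rw [show z - (R + m) • u = (z - m • u) - R • u by module, norm_sub_sq_real, inner_smul_right,
      inner_sub_left, inner_smul_left, real_inner_self_eq_norm_sq, norm_smul, hu]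
    simp only [conj_trivial, Real.norm_eq_abs, sq_abs, mul_one, one_pow]
    ring
  have hball : ‖z - (R + m) • u‖ ^ 2 ≤ R ^ 2 :=
    pow_le_pow_left₀ (norm_nonneg _) (mem_closedBall_iff_norm.1 hz) 2
  have hzero : ‖z - m • u‖ ^ 2 ≤ 0 := by nlinarith [mul_nonneg hR (sub_nonneg.2 hzu)]
  exact sub_eq_zero.1 (norm_eq_zero.1 (pow_eq_zero_iff two_ne_zero |>.1
    (le_antisymm hzero (sq_nonneg _))))

end HalfPlane

theorem dist_sq_eq_fin_two (x y : EuclideanSpace ℝ (Fin 2)) :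
    dist x y ^ 2 = (x 0 - y 0) ^ 2 + (x 1 - y 1) ^ 2 := by
  rw [EuclideanSpace.dist_eq, sq_sqrt (by positivity)]
  simp [Fin.sum_univ_two, Real.dist_eq, sq_abs]

theorem sqrt_three_bounds : 1.732 ≤ √3 ∧ √3 ≤ 1.733 := by
  constructor
  · rw [Real.le_sqrt' (by norm_num)]; norm_num
  · rw [Real.sqrt_le_left (by norm_num)]; norm_num

theorem one_div_sqrt_three : 1 / √3 = √3 / 3 := by
  field_simp
  rw [sq_sqrt (by norm_num)]

theorem mul_two_div_sqrt_three_sub_one_mem_Icc {r : ℝ} (hr : r ∈ Set.Icc (1 : ℝ) 3) :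
    3 / 20 ≤ r * (2 / √3 - 1) ∧ r * (2 / √3 - 1) ≤ 1 / 2 := by
  obtain ⟨hlo, hhi⟩ := sqrt_three_bounds
  have hpos : 3 / 20 ≤ 2 / √3 - 1 := by
    rw [le_sub_iff_add_le, le_div_iff₀ (by linarith)]; linarith
  have hle : 2 / √3 - 1 ≤ 1 / 6 := by
    rw [sub_le_iff_le_add, div_le_iff₀ (by linarith)]; linarith
  constructor <;> nlinarith [hr.1, hr.2]

-- For the center `(x, y)` of `D₁` one has `y = -√3 K / 2` with `K = 2rm + m² + 1/3`; this is
-- `(√3 x)² ≥ (y + 2(r - m))²` after eliminating `x` and `y`, with `√3` bounded below by `1.732`.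
theorem tangency_polynomial_bound {r m : ℝ} (hr : 0 < r) (hr3 : r ≤ 3) (hm : 3 / 20 ≤ m)
    (hm' : m ≤ 1 / 2) (h : 1.732 * (2 * r * m + m ^ 2 + 1 / 3) ≤ 4 * (r - m)) :
    4 * (r - m) ^ 2 + 3 * (2 * r * m + m ^ 2 + 1 / 3) ^ 2
      ≤ 3 * (r + m) ^ 2 + 3.464 * (2 * r * m + m ^ 2 + 1 / 3) * (r - m) := by
  have hm₀ : 0 ≤ (m - 3 / 20) * (1 / 2 - m) := mul_nonneg (by linarith) (by linarith)
  nlinarith [mul_nonneg (sub_nonneg.2 h) (sub_nonneg.2 hr3), mul_nonneg hm₀ (sub_nonneg.2 hr3),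
    mul_nonneg hm₀ hr.le]

noncomputable def lineDir : EuclideanSpace ℝ (Fin 2) := pt (-(√3 / 2)) (1 / 2)

theorem inner_lineDir (z : EuclideanSpace ℝ (Fin 2)) :
    ⟪z, lineDir⟫ = (z 1 - √3 * z 0) / 2 := by
  simp only [lineDir, pt, PiLp.inner_apply, RCLike.inner_apply, conj_trivial, Fin.sum_univ_two,
    Matrix.cons_val_zero, Matrix.cons_val_one, Matrix.cons_val_fin_one]
  ring

theorem norm_lineDir : ‖lineDir‖ = 1 := by
  rw [EuclideanSpace.norm_eq, Real.sqrt_eq_one]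
  simp only [lineDir, pt, Real.norm_eq_abs, sq_abs, Fin.sum_univ_two, Matrix.cons_val_zero,
    Matrix.cons_val_one, Matrix.cons_val_fin_one, neg_sq, div_pow,
    sq_sqrt (show (0 : ℝ) ≤ 3 by norm_num)]
  norm_num

theorem smul_lineDir_apply_one (a : ℝ) : (a • lineDir) 1 = -((a • lineDir) 0) / √3 := by
  simp only [lineDir, pt, PiLp.smul_apply, smul_eq_mul, Matrix.cons_val_zero,
    Matrix.cons_val_one, Matrix.cons_val_fin_one]
  field_simp

theorem eq_smul_lineDir {c : EuclideanSpace ℝ (Fin 2)} {d : ℝ} (hd : dist c (pt 0 0) = d)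
    (hline : c 1 = -(c 0) / √3) (hc : 0 < c 1) : c = d • lineDir := by
  have hs : √3 ^ 2 = 3 := sq_sqrt (by norm_num)
  have hc0 : c 0 = -(√3 * c 1) := by rw [hline]; field_simp
  have hd2 := dist_sq_eq_fin_two c (pt 0 0)
  rw [hd] at hd2
  simp only [pt, PiLp.toLp_apply, Matrix.cons_val_zero, Matrix.cons_val_one, sub_zero, hc0] at hd2
  have hd1 : d = 2 * c 1 := by
    have hd0 : 0 ≤ d := hd ▸ dist_nonneg
    nlinarith
  ext i
  fin_cases i <;>
    simp only [Fin.zero_eta, Fin.mk_one, hc0, hd1, lineDir, pt, PiLp.smul_apply, smul_eq_mul,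
      Matrix.cons_val_zero, Matrix.cons_val_one, Matrix.cons_val_fin_one] <;>
    ring

theorem inner_lineDir_add_le {c : EuclideanSpace ℝ (Fin 2)} {r m : ℝ} (hr : 0 < r)
    (hr3 : r ≤ 3) (hm : 3 / 20 ≤ m) (hm' : m ≤ 1 / 2) (hc : 0 < c 0)
    (hp : dist c (pt 0 (-(1 / √3))) = r) (hM : dist c (pt 0 0) = r + m) :
    ⟪c, lineDir⟫ + r ≤ m := by
  obtain ⟨hs, -⟩ := sqrt_three_bounds
  have hs2 : √3 ^ 2 = 3 := sq_sqrt (by norm_num)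
  have hp2 := dist_sq_eq_fin_two c (pt 0 (-(1 / √3)))
  have hM2 := dist_sq_eq_fin_two c (pt 0 0)
  rw [hp] at hp2
  rw [hM] at hM2
  simp only [pt, PiLp.toLp_apply, Matrix.cons_val_zero, Matrix.cons_val_one, sub_zero,
    sub_neg_eq_add] at hp2 hM2
  rw [inner_lineDir]
  set x := c 0
  set y := c 1
  set K := 2 * r * m + m ^ 2 + 1 / 3 with hK
  have hy : y = -(√3 * K) / 2 := by
    rw [one_div_sqrt_three] at hp2
    linear_combination (√3 / 2) * (hM2 - hp2) + (-(y / 3) - √3 / 18) * hs2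
  suffices y + 2 * (r - m) ≤ √3 * x by linarith
  rcases le_or_gt (y + 2 * (r - m)) 0 with hq | hq
  · nlinarith
  have hK0 : 0 < K := by positivity
  have hrm : 0 < r - m := by nlinarith
  have hpoly := tangency_polynomial_bound hr hr3 hm hm'
    (by nlinarith [mul_le_mul_of_nonneg_right hs hK0.le])
  rw [← hK] at hpoly
  have hsKrm : 1.732 * (K * (r - m)) ≤ √3 * (K * (r - m)) :=
    mul_le_mul_of_nonneg_right hs (mul_nonneg hK0.le hrm.le)
  have hsq : (y + 2 * (r - m)) ^ 2 ≤ (√3 * x) ^ 2 := by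
    have hy2 : y ^ 2 = 3 * K ^ 2 / 4 := by rw [hy]; linear_combination K ^ 2 / 4 * hs2
    have hx2 : (√3 * x) ^ 2 = 3 * x ^ 2 := by rw [mul_pow, hs2]
    have hyrm : y * (r - m) = -(√3 * (K * (r - m))) / 2 := by rw [hy]; ring
    linarith
  exact (abs_le_of_sq_le_sq' hsq (by positivity)).2

theorem stmt_19_general (r : ℝ) (hr : r ∈ Set.Icc (1 : ℝ) 3)
    (c₁ c₂ : EuclideanSpace ℝ (Fin 2)) (r₁ r₂ : ℝ)
    (hr₁ : 0 < r₁ ∧ r₁ ≤ 3)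
    (h₁p : dist c₁ (pt 0 (-(1 / Real.sqrt 3))) = r₁)
    (h₁M : dist c₁ (pt 0 0) = r₁ + r * (2 / Real.sqrt 3 - 1))
    (h₁quad : c₁ 0 > 0 ∧ c₁ 1 < 0)
    (h₂M : dist c₂ (pt 0 0) = r₂ + r * (2 / Real.sqrt 3 - 1))
    (h₂line : c₂ 1 = -(c₂ 0) / Real.sqrt 3)
    (h₂quad : c₂ 0 < 0 ∧ c₂ 1 > 0) :
    ∀ z ∈ Metric.closedBall c₁ r₁ ∩ Metric.closedBall c₂ r₂,
      ¬ (z 1 < -(z 0) / Real.sqrt 3) := by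
  rintro z ⟨hz₁, hz₂⟩ hbelow
  set m := r * (2 / √3 - 1)
  obtain ⟨hm, hm'⟩ := mul_two_div_sqrt_three_sub_one_mem_Icc hr
  have hz : ⟪z, lineDir⟫ ≤ m :=
    inner_le_of_mem_closedBall norm_lineDir
      (inner_lineDir_add_le hr₁.1 hr₁.2 hm hm' h₁quad.1 h₁p h₁M) hz₁
  rw [eq_smul_lineDir h₂M h₂line h₂quad.2] at hz₂
  obtain rfl := eq_smul_of_mem_closedBall_of_inner_le norm_lineDir hz₂ hz
  exact hbelow.ne (smul_lineDir_apply_one m)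

/-- Lemma (instantiation of Lemma 120): `M` is the circle of radius `r(2/√3 - 1)`
centered at the origin, `p = (0, -1/√3)`; `D₁` is a disk of radius at most 3
touching `p` and `M` with center in the fourth quadrant; `D₂` is a disk of radius
at most 3 touching `M` with center on the line `y = -x/√3` in the second quadrant.
Then `D₁` and `D₂` have no common point strictly below the line `y = -x/√3`. -/
theorem stmt_19 (r : ℝ) (hr : r ∈ Set.Icc (1 : ℝ) 3)
    (c₁ c₂ : EuclideanSpace ℝ (Fin 2)) (r₁ r₂ : ℝ)
    (hr₁ : 0 < r₁ ∧ r₁ ≤ 3) (hr₂ : 0 < r₂ ∧ r₂ ≤ 3)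
    (h₁p : dist c₁ (pt 0 (-(1 / Real.sqrt 3))) = r₁)
    (h₁M : dist c₁ (pt 0 0) = r₁ + r * (2 / Real.sqrt 3 - 1))
    (h₁quad : c₁ 0 > 0 ∧ c₁ 1 < 0)
    (h₂M : dist c₂ (pt 0 0) = r₂ + r * (2 / Real.sqrt 3 - 1))
    (h₂line : c₂ 1 = -(c₂ 0) / Real.sqrt 3)
    (h₂quad : c₂ 0 < 0 ∧ c₂ 1 > 0) :
    ∀ z ∈ Metric.closedBall c₁ r₁ ∩ Metric.closedBall c₂ r₂,
      ¬ (z 1 < -(z 0) / Real.sqrt 3) :=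
  stmt_19_general r hr c₁ c₂ r₁ r₂ hr₁ h₁p h₁M h₁quad h₂M h₂line h₂quad
end
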